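/- ΔC(b₀) < e^ε/(1−δ), where b₀ = ΔQ/(ε − log(1−δ)); consequently f(b₀) = ΔQ/(ε − log ΔC(b₀) − log(1−δ)) > 0. -/
import Mathlib


open Real

/-- Normalisation constant of the bounded Laplace mechanism on `[l,u]`. -/
noncomputable def C (l u b q : ℝ) : ℝ :=
  1 - (1 / 2) * (Real.exp (-(q - l) / b) + Real.exp (-(u - q) / b))

/-- `ΔC(b) = C_{l+ΔQ}(b) / C_l(b)`. -/
noncomputable def deltaC (l u ΔQ b : ℝ) : ℝ := C l u b (l + ΔQ) / C l u b l

lemma C_pos (l u b q : ℝ) (hb : 0 < b) (h1 : l ≤ q) (h2 : q ≤ u) (hlu : l < u) :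
    0 < C l u b q := by
  unfold C
  have e1 : Real.exp (-(q - l) / b) ≤ 1 := by
    rw [Real.exp_le_one_iff]
    apply div_nonpos_of_nonpos_of_nonneg <;> linarith
  have e2 : Real.exp (-(u - q) / b) ≤ 1 := by
    rw [Real.exp_le_one_iff]
    apply div_nonpos_of_nonpos_of_nonneg <;> linarith
  rcases lt_or_ge l q with h | h
  · have : Real.exp (-(q - l) / b) < 1 := by
      rw [Real.exp_lt_one_iff]
      apply div_neg_of_neg_of_pos <;> linarith
    linarith
  · have hq : q = l := le_antisymm h h1
    have : Real.exp (-(u - q) / b) < 1 := by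
      rw [Real.exp_lt_one_iff]
      apply div_neg_of_neg_of_pos <;> linarith [hq ▸ hlu]
    linarith

theorem deltaC_b0_lt (l u ΔQ ε δ : ℝ) (hlu : l < u)
    (hΔQ : 0 < ΔQ) (hΔQu : ΔQ ≤ u - l) (hε : 0 ≤ ε) (hδ0 : 0 ≤ δ) (hδ1 : δ < 1)
    (hne : ¬(ε = 0 ∧ δ = 0)) :
    deltaC l u ΔQ (ΔQ / (ε - Real.log (1 - δ))) < Real.exp ε / (1 - δ) ∧
    0 < ΔQ / (ε - Real.log (deltaC l u ΔQ (ΔQ / (ε - Real.log (1 - δ))))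
                - Real.log (1 - δ)) := by
  have hδ' : 0 < 1 - δ := by linarith
  set D := ε - Real.log (1 - δ) with hDdef
  have hlognp : Real.log (1 - δ) ≤ 0 := Real.log_nonpos (by linarith) (by linarith)
  have hDpos : 0 < D := by
    rcases eq_or_lt_of_le hε with hε0 | hε0
    · have hδpos : 0 < δ := by
        rcases eq_or_lt_of_le hδ0 with h | h
        · exact absurd ⟨hε0.symm, h.symm⟩ hne
        · exact h
      have : Real.log (1 - δ) < 0 := Real.log_neg hδ' (by linarith)
      simp only [hDdef]; linarith
    · simp only [hDdef]; linarith
  set b := ΔQ / D with hbdef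
  have hb : 0 < b := div_pos hΔQ hDpos
  have htb : ΔQ / b = D := by
    rw [hbdef]; field_simp
  have hCl : 0 < C l u b l := C_pos l u b l hb le_rfl hlu.le hlu
  have hCq : 0 < C l u b (l + ΔQ) := C_pos l u b (l + ΔQ) hb (by linarith) (by linarith) hlu
  have key : C l u b (l + ΔQ) < Real.exp D * C l u b l := by
    unfold C
    have h1 : -(l + ΔQ - l) / b = -(ΔQ / b) := by ring
    have h2 : -(u - (l + ΔQ)) / b = ΔQ / b + -(u - l) / b := by ring
    have h3 : -(l - l) / b = 0 := by ring
    rw [h1, h2, h3, Real.exp_add, Real.exp_zero, htb]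
    set E := Real.exp D with hE
    set F := Real.exp (-(u - l) / b) with hF
    set I := Real.exp (-D) with hI
    have hEI : E * I = 1 := by rw [hE, hI, ← Real.exp_add]; simp
    have hE1 : 1 < E := by
      rw [hE, ← Real.exp_zero]; exact Real.exp_lt_exp.mpr hDpos
    have hI1 : I < 1 := by rw [hI, Real.exp_lt_one_iff]; linarith
    have hFpos : 0 < F := Real.exp_pos _
    nlinarith [mul_pos (sub_pos.mpr hE1) (sub_pos.mpr hI1)]
  have hdlt : deltaC l u ΔQ b < Real.exp D := by
    rw [deltaC, div_lt_iff₀ hCl]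
    exact key
  have hdpos : 0 < deltaC l u ΔQ b := div_pos hCq hCl
  have hexpD : Real.exp D = Real.exp ε / (1 - δ) := by
    rw [hDdef, Real.exp_sub, Real.exp_log hδ']
  constructor
  · rw [← hexpD]; exact hdlt
  · have hlogd : Real.log (deltaC l u ΔQ b) < D := by
      have h := Real.log_lt_log hdpos hdlt
      rwa [Real.log_exp] at h
    apply div_pos hΔQ
    have : ε - Real.log (deltaC l u ΔQ b) - Real.log (1 - δ)
        = D - Real.log (deltaC l u ΔQ b) := by rw [hDdef]; ring
    rw [this]
    linarith
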